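/- With b as in the Merton-style bond pricing formula, for each fixed t ∈ [0,T), the function v ↦ b(t,v)/v is strictly decreasing on (0,∞); indeed ∂/∂v (b(t,v)/v) = -D(1 - N(d₂(t,v)))/v² < 0. -/

import Mathlib

open Real

/-- Standard normal CDF. -/
noncomputable def stdNormalCDF (x : ℝ) : ℝ :=
  ∫ z in Set.Iic x, (Real.sqrt (2 * Real.pi))⁻¹ * Real.exp (-z ^ 2 / 2)

noncomputable def d₁ (α σ₁ D T t v : ℝ) : ℝ :=
  (Real.log (D / v) - σ₁ ^ 2 * (1 / 2 + α / σ₁ ^ 2) * (T - t)) / (σ₁ * Real.sqrt (T - t))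

noncomputable def d₂ (α σ₁ D T t v : ℝ) : ℝ :=
  d₁ α σ₁ D T t v + σ₁ * Real.sqrt (T - t)

/-- The Merton-style bond price function `b`. -/
noncomputable def bfun (α σ₁ D T t v : ℝ) : ℝ :=
  v * Real.exp (α * (T - t)) * stdNormalCDF (d₁ α σ₁ D T t v)
    + D * (1 - stdNormalCDF (d₂ α σ₁ D T t v))

/-!
With `N' = φ` the standard Gaussian density, the terms of `∂b/∂v` involving `φ` cancel because
`d₂² - d₁² = 2 log (D / v) - 2α(T - t)`, i.e. `v e^{α(T-t)} φ(d₁) = D φ(d₂)`. Hence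
`∂b/∂v = e^{α(T-t)} N(d₁)`, and the quotient rule gives `∂(b/v)/∂v = -D(1 - N(d₂))/v²`, which is
negative because `φ > 0` everywhere forces `N < 1`.
-/

open MeasureTheory ProbabilityTheory Set

theorem hasDerivAt_integral_Iic {E : Type*} [NormedAddCommGroup E] [NormedSpace ℝ E]
    [CompleteSpace E] {f : ℝ → E} (hf : Integrable f) {x : ℝ} (hx : ContinuousAt f x) :
    HasDerivAt (fun y => ∫ z in Iic y, f z) (f x) x := by
  have h : (fun y => ∫ z in Iic y, f z) = fun y => (∫ z in Iic 0, f z) + ∫ z in 0..y, f z := by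
    funext y
    rw [← intervalIntegral.integral_Iic_sub_Iic hf.integrableOn hf.integrableOn, add_sub_cancel]
  rw [h]
  exact (intervalIntegral.integral_hasDerivAt_right hf.intervalIntegrable
    (hf.aestronglyMeasurable.stronglyMeasurableAtFilter) hx).const_add _

theorem setIntegral_Iic_lt_integral {f : ℝ → ℝ} (hf : Integrable f) (hpos : ∀ z, 0 < f z)
    (x : ℝ) : ∫ z in Iic x, f z < ∫ z, f z := by
  rw [← intervalIntegral.integral_Iic_add_Ioi hf.integrableOn hf.integrableOn, lt_add_iff_pos_right]
  refine (setIntegral_pos_iff_support_of_nonneg_ae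
    (ae_of_all _ fun z => (hpos z).le) hf.integrableOn).2 ?_
  simp [Function.support_eq_univ fun z => (hpos z).ne']

theorem gaussianPDFReal_zero_one (z : ℝ) :
    gaussianPDFReal 0 1 z = (√(2 * π))⁻¹ * exp (-z ^ 2 / 2) := by
  simp [gaussianPDFReal]

theorem stdNormalCDF_eq_integral_gaussianPDFReal (x : ℝ) :
    stdNormalCDF x = ∫ z in Iic x, gaussianPDFReal 0 1 z := by
  simp only [stdNormalCDF, gaussianPDFReal_zero_one]

theorem hasDerivAt_stdNormalCDF (x : ℝ) :
    HasDerivAt stdNormalCDF (gaussianPDFReal 0 1 x) x := by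
  rw [funext stdNormalCDF_eq_integral_gaussianPDFReal]
  exact hasDerivAt_integral_Iic (integrable_gaussianPDFReal 0 1)
    (by rw [gaussianPDFReal_def]; fun_prop)

theorem stdNormalCDF_lt_one (x : ℝ) : stdNormalCDF x < 1 := by
  rw [stdNormalCDF_eq_integral_gaussianPDFReal, ← integral_gaussianPDFReal_eq_one 0 one_ne_zero]
  exact setIntegral_Iic_lt_integral (integrable_gaussianPDFReal 0 1)
    (fun z => gaussianPDFReal_pos 0 1 z one_ne_zero) x

section Merton

variable (α σ₁ D T t : ℝ) {v : ℝ}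

theorem hasDerivAt_d₁ (hD : D ≠ 0) (hv : v ≠ 0) :
    HasDerivAt (d₁ α σ₁ D T t) (-v⁻¹ / (σ₁ * √(T - t))) v := by
  have hlog : HasDerivAt (fun w => log (D / w)) (-v⁻¹) v :=
    (((hasDerivAt_const v D).div (hasDerivAt_id' v) hv).log (div_ne_zero hD hv)).congr_deriv
      (by simp only [Pi.div_apply]; field)
  exact (hlog.sub_const _).div_const _

theorem hasDerivAt_d₂ (hD : D ≠ 0) (hv : v ≠ 0) :
    HasDerivAt (d₂ α σ₁ D T t) (-v⁻¹ / (σ₁ * √(T - t))) v :=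
  (hasDerivAt_d₁ α σ₁ D T t hD hv).add_const _

theorem mul_gaussianPDFReal_d₁ (hσ₁ : σ₁ ≠ 0) (htT : t < T) (hD : 0 < D) (hv : 0 < v) :
    v * exp (α * (T - t)) * gaussianPDFReal 0 1 (d₁ α σ₁ D T t v)
      = D * gaussianPDFReal 0 1 (d₂ α σ₁ D T t v) := by
  have hs : σ₁ * √(T - t) ≠ 0 := mul_ne_zero hσ₁ (Real.sqrt_pos.2 (sub_pos.2 htT)).ne'
  have hsqrt_sq : √(T - t) ^ 2 = T - t := Real.sq_sqrt (sub_pos.2 htT).le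
  have hs_d₁ : σ₁ * √(T - t) * d₁ α σ₁ D T t v = log D - log v - (σ₁ ^ 2 / 2 + α) * (T - t) := by
    rw [d₁, mul_div_cancel₀ _ hs, Real.log_div hD.ne' hv.ne']
    field_simp
  have hexp : v * exp (α * (T - t)) * exp (-d₁ α σ₁ D T t v ^ 2 / 2)
      = D * exp (-d₂ α σ₁ D T t v ^ 2 / 2) := calc
    _ = exp (log v + α * (T - t) + -d₁ α σ₁ D T t v ^ 2 / 2) := by
      rw [exp_add, exp_add, exp_log hv]
    _ = exp (log D + -d₂ α σ₁ D T t v ^ 2 / 2) := by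
      rw [d₂]
      congr 1
      linear_combination hs_d₁ + σ₁ ^ 2 * hsqrt_sq / 2
    _ = D * exp (-d₂ α σ₁ D T t v ^ 2 / 2) := by rw [exp_add, exp_log hD]
  simp only [gaussianPDFReal_zero_one]
  linear_combination (√(2 * π))⁻¹ * hexp

theorem hasDerivAt_bfun (hσ₁ : σ₁ ≠ 0) (htT : t < T) (hD : 0 < D) (hv : 0 < v) :
    HasDerivAt (bfun α σ₁ D T t) (exp (α * (T - t)) * stdNormalCDF (d₁ α σ₁ D T t v)) v := by
  have hN₁ := (hasDerivAt_stdNormalCDF _).comp v (hasDerivAt_d₁ α σ₁ D T t hD.ne' hv.ne')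
  have hN₂ := (hasDerivAt_stdNormalCDF _).comp v (hasDerivAt_d₂ α σ₁ D T t hD.ne' hv.ne')
  have hb := (((hasDerivAt_id' v).mul_const (exp (α * (T - t)))).mul hN₁).add
    ((hN₂.const_sub 1).const_mul D)
  refine hb.congr_deriv ?_
  simp only [Function.comp_apply]
  linear_combination mul_gaussianPDFReal_d₁ α σ₁ D T t hσ₁ htT hD hv * (-v⁻¹ / (σ₁ * √(T - t)))

theorem hasDerivAt_bfun_div_self (hσ₁ : σ₁ ≠ 0) (htT : t < T) (hD : 0 < D) (hv : 0 < v) :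
    HasDerivAt (fun w => bfun α σ₁ D T t w / w)
      (-(D * (1 - stdNormalCDF (d₂ α σ₁ D T t v)) / v ^ 2)) v := by
  refine ((hasDerivAt_bfun α σ₁ D T t hσ₁ htT hD hv).div (hasDerivAt_id' v) hv.ne').congr_deriv ?_
  rw [bfun]
  field

end Merton

theorem b_over_v_strictAnti_general (μ₁ μ₂ ρ σ₁ σ₂ D T t : ℝ)
    (hσ₁ : 0 < σ₁) (hD : 0 < D) (htT : t < T) :
    (∀ v : ℝ, 0 < v →
      HasDerivAt (fun v => bfun (μ₁ - ρ * μ₂ * σ₁ / σ₂) σ₁ D T t v / v)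
        (-(D * (1 - stdNormalCDF (d₂ (μ₁ - ρ * μ₂ * σ₁ / σ₂) σ₁ D T t v)) / v ^ 2)) v) ∧
    (∀ v : ℝ, 0 < v →
      -(D * (1 - stdNormalCDF (d₂ (μ₁ - ρ * μ₂ * σ₁ / σ₂) σ₁ D T t v)) / v ^ 2) < 0) ∧
    StrictAntiOn (fun v => bfun (μ₁ - ρ * μ₂ * σ₁ / σ₂) σ₁ D T t v / v) (Set.Ioi 0) := by
  have hderiv (v : ℝ) (hv : 0 < v) :=
    hasDerivAt_bfun_div_self (μ₁ - ρ * μ₂ * σ₁ / σ₂) σ₁ D T t hσ₁.ne' htT hD hv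
  have hneg (v : ℝ) (hv : 0 < v) :
      -(D * (1 - stdNormalCDF (d₂ (μ₁ - ρ * μ₂ * σ₁ / σ₂) σ₁ D T t v)) / v ^ 2) < 0 :=
    neg_neg_of_pos <| div_pos (mul_pos hD (sub_pos.2 (stdNormalCDF_lt_one _))) (pow_pos hv 2)
  refine ⟨hderiv, hneg, strictAntiOn_of_deriv_neg (convex_Ioi 0)
    (fun v hv => (hderiv v hv).continuousAt.continuousWithinAt) fun v hv => ?_⟩
  rw [interior_Ioi] at hv
  rw [(hderiv v hv).deriv]
  exact hneg v hv

theorem b_over_v_strictAnti (μ₁ μ₂ ρ σ₁ σ₂ D T t : ℝ)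
    (hσ₁ : 0 < σ₁) (hσ₂ : 0 < σ₂) (hD : 0 < D) (ht : 0 ≤ t) (htT : t < T) :
    (∀ v : ℝ, 0 < v →
      HasDerivAt (fun v => bfun (μ₁ - ρ * μ₂ * σ₁ / σ₂) σ₁ D T t v / v)
        (-(D * (1 - stdNormalCDF (d₂ (μ₁ - ρ * μ₂ * σ₁ / σ₂) σ₁ D T t v)) / v ^ 2)) v) ∧
    (∀ v : ℝ, 0 < v →
      -(D * (1 - stdNormalCDF (d₂ (μ₁ - ρ * μ₂ * σ₁ / σ₂) σ₁ D T t v)) / v ^ 2) < 0) ∧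
    StrictAntiOn (fun v => bfun (μ₁ - ρ * μ₂ * σ₁ / σ₂) σ₁ D T t v / v) (Set.Ioi 0) :=
  b_over_v_strictAnti_general μ₁ μ₂ ρ σ₁ σ₂ D T t hσ₁ hD htT
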